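/- Every node (v, X) of dec(G) can reach the unique sink component C by a directed walk in dec(G); consequently, C is the only sink component of dec(G). -/

import Mathlib

/-- The update to the active set when a walk on the event graph enters node `w`:
insert `elt w` if `w` is an insertion node (`ins w = true`), delete it otherwise. -/
def decStep {V U : Type*} (ins : V → Bool) (elt : V → U) (w : V) (X : Set U) : Set U :=
  if ins w = true then X ∪ {elt w} else X \ {elt w}

/-- The edge relation of the decorated graph `dec(G)`: `(u, X) → (v, Y)` iff `uv` is an
edge of `G` and `Y` is obtained from `X` by performing the operation at `v`. -/
def decAdj {V U : Type*} (G : SimpleGraph V) (ins : V → Bool) (elt : V → U)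
    (p q : V × Set U) : Prop :=
  G.Adj p.1 q.1 ∧ q.2 = decStep ins elt q.1 p.2

/-- A sink component of the relation `R`: a nonempty strongly connected set of
vertices that is closed under reachability (equivalently, a strongly connected
component with no edges leaving it). -/
def IsSinkComponent {α : Type*} (R : α → α → Prop) (C : Set α) : Prop :=
  C.Nonempty ∧
  (∀ p ∈ C, ∀ q ∈ C, Relation.ReflTransGen R p q) ∧
  (∀ p ∈ C, ∀ q, Relation.ReflTransGen R p q → q ∈ C)

/-- The set decorating the final node of the lifting `lt(W, X)` of the walk `W`
(given as the list of its nodes) starting from the decorated node `(W.head, X)`: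
the operations at all nodes of `W` after the first are applied to `X` in order. -/
def liftEndSet {V U : Type*} (ins : V → Bool) (elt : V → U) (X : Set U) (W : List V) : Set U :=
  W.tail.foldl (fun Y u => decStep ins elt u Y) X

/-- A certifying walk for the decorated node `(v, X)`: a closed walk `W` in `G`
starting and ending at `v` such that every element of the universe is referred to
by the label of some node of `W`, and an element `x` lies in `X` exactly when the
last node of `W` whose label refers to `x` is an insertion node. -/
def IsCertifyingWalk {V U : Type*} (G : SimpleGraph V) (ins : V → Bool) (elt : V → U)
    (v : V) (X : Set U) (W : List V) : Prop :=
  W ≠ [] ∧ W.Chain' G.Adj ∧ W.head? = some v ∧ W.getLast? = some v ∧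
  ∀ x : U, ∃ W₁ w W₂, W = W₁ ++ w :: W₂ ∧ elt w = x ∧
    (∀ u ∈ W₂, elt u ≠ x) ∧ (x ∈ X ↔ ins w = true)

section Aux
variable {V U : Type*} {G : SimpleGraph V} (ins : V → Bool) (elt : V → U)

lemma mem_decStep_of_ne {u : V} {x : U} (h : elt u ≠ x) (Y : Set U) :
    x ∈ decStep ins elt u Y ↔ x ∈ Y := by
  unfold decStep
  split <;> simp [Ne.symm h]

lemma mem_decStep_self {u : V} {x : U} (h : elt u = x) (Y : Set U) :
    x ∈ decStep ins elt u Y ↔ ins u = true := by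
  subst h
  unfold decStep
  rcases Bool.eq_false_or_eq_true (ins u) with h' | h' <;> simp [h']

lemma fold_untouched {x : U} : ∀ (l : List V) (Y : Set U), (∀ u ∈ l, elt u ≠ x) →
    (x ∈ l.foldl (fun Y u => decStep ins elt u Y) Y ↔ x ∈ Y) := by
  intro l
  induction l with
  | nil => intro Y _; rfl
  | cons u t ih =>
    intro Y h
    simp only [List.foldl_cons]
    rw [ih _ (fun u hu => h u (List.mem_cons_of_mem _ hu)),
      mem_decStep_of_ne ins elt (h u List.mem_cons_self)]

lemma fold_indep {x : U} : ∀ (l : List V) (X X' : Set U), (∃ u ∈ l, elt u = x) →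
    (x ∈ l.foldl (fun Y u => decStep ins elt u Y) X ↔
     x ∈ l.foldl (fun Y u => decStep ins elt u Y) X') := by
  intro l
  induction l with
  | nil => intro X X' h; simp at h
  | cons u t ih =>
    intro X X' h
    simp only [List.foldl_cons]
    by_cases ht : ∃ u' ∈ t, elt u' = x
    · exact ih _ _ ht
    · have hu : elt u = x := by
        obtain ⟨w, hw, hwx⟩ := h
        rcases List.mem_cons.1 hw with rfl | hw'
        · exact hwx
        · exact absurd ⟨w, hw', hwx⟩ ht
      push_neg at ht
      rw [fold_untouched ins elt t _ ht, fold_untouched ins elt t _ ht,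
        mem_decStep_self ins elt hu, mem_decStep_self ins elt hu]

lemma lift_walk (G : SimpleGraph V) : ∀ {a b : V} (p : G.Walk a b) (X : Set U),
    Relation.ReflTransGen (decAdj G ins elt) (a, X)
      (b, p.support.tail.foldl (fun Y u => decStep ins elt u Y) X) := by
  intro a b p
  induction p with
  | nil =>
    intro X
    simp only [SimpleGraph.Walk.support_nil, List.tail_cons, List.foldl_nil]
    exact Relation.ReflTransGen.refl
  | @cons a c b h p ih =>
    intro X
    refine Relation.ReflTransGen.head (b := (c, decStep ins elt c X)) ⟨h, rfl⟩ ?_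
    have := ih (decStep ins elt c X)
    rw [SimpleGraph.Walk.support_cons, List.tail_cons, p.support_eq_cons, List.foldl_cons]
    rw [p.support_eq_cons, List.tail_cons] at this
    exact this

lemma relift {p q : V × Set U} (h : Relation.ReflTransGen (decAdj G ins elt) p q)
    (A : Set U) : ∃ B, Relation.ReflTransGen (decAdj G ins elt) (p.1, A) (q.1, B) := by
  induction h with
  | refl => exact ⟨A, .refl⟩
  | @tail b c h1 h2 ih =>
    obtain ⟨B, hB⟩ := ih
    exact ⟨decStep ins elt c.1 B, hB.tail ⟨h2.1, rfl⟩⟩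

lemma end_mem_tail_support {a b : V} (h : a ≠ b) (p : G.Walk a b) :
    b ∈ p.support.tail := by
  cases p with
  | nil => exact absurd rfl h
  | cons h' p' =>
    rw [SimpleGraph.Walk.support_cons, List.tail_cons]
    exact SimpleGraph.Walk.end_mem_support p'

lemma exists_cover_walk (G : SimpleGraph V) (hconn : G.Connected)
    (hIns : ∀ x : U, ∃ w : V, ins w = true ∧ elt w = x)
    (hDel : ∀ x : U, ∃ w : V, ins w = false ∧ elt w = x) :
    ∀ (l : List U) (v : V), ∃ p : G.Walk v v, ∀ x ∈ l, ∃ u ∈ p.support.tail, elt u = x := by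
  intro l
  induction l with
  | nil => intro v; exact ⟨SimpleGraph.Walk.nil, by simp⟩
  | cons x t ih =>
    intro v
    obtain ⟨p, hp⟩ := ih v
    obtain ⟨ix, hix, hix2⟩ := hIns x
    obtain ⟨dx, hdx, hdx2⟩ := hDel x
    have hne : ix ≠ dx := fun h => by rw [h, hdx] at hix; exact Bool.noConfusion hix
    have p1 : G.Walk v ix := (hconn.preconnected v ix).some
    have p2 : G.Walk ix dx := (hconn.preconnected ix dx).some
    have p3 : G.Walk dx v := (hconn.preconnected dx v).some
    refine ⟨p1.append (p2.append (p3.append p)), ?_⟩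
    intro y hy
    have hsupp : (p1.append (p2.append (p3.append p))).support.tail =
        p1.support.tail ++ (p2.support.tail ++ (p3.support.tail ++ p.support.tail)) := by
      simp [SimpleGraph.Walk.support_append, List.tail_append_of_ne_nil,
        SimpleGraph.Walk.support_ne_nil, List.tail_append]
    rw [hsupp]
    rcases List.mem_cons.1 hy with rfl | hy'
    · exact ⟨dx, by simp [end_mem_tail_support hne p2], hdx2⟩
    · obtain ⟨u, hu, hu2⟩ := hp y hy'
      exact ⟨u, by simp [hu], hu2⟩

end Aux

/-- Every node of `dec(G)` can reach the unique sink component `C`; consequently,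
`C` is the only sink component of `dec(G)`. -/
theorem stmt_4 {V U : Type*} [Fintype V] [Fintype U]
    (G : SimpleGraph V) (hconn : G.Connected)
    (ins : V → Bool) (elt : V → U)
    (hIns : ∀ x : U, ∃ w : V, ins w = true ∧ elt w = x)
    (hDel : ∀ x : U, ∃ w : V, ins w = false ∧ elt w = x)
    (C : Set (V × Set U)) (hC : IsSinkComponent (decAdj G ins elt) C)
    (hreach : ∀ w : V, ∃ q ∈ C, Relation.ReflTransGen (decAdj G ins elt) (w, (∅ : Set U)) q) :
    (∀ p : V × Set U, ∃ q ∈ C, Relation.ReflTransGen (decAdj G ins elt) p q) ∧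
    (∀ C' : Set (V × Set U), IsSinkComponent (decAdj G ins elt) C' → C' = C) := by
  have main : ∀ p : V × Set U, ∃ q ∈ C, Relation.ReflTransGen (decAdj G ins elt) p q := by
    intro p
    obtain ⟨q, hqC, hq⟩ := hreach p.1
    obtain ⟨B, hB⟩ := relift ins elt hq p.2
    obtain ⟨W, hW⟩ := exists_cover_walk ins elt G hconn hIns hDel (Finset.univ : Finset U).toList q.1
    set f : Set U → V → Set U := fun Y u => decStep ins elt u Y with hf
    have hcov : ∀ x : U, ∃ u ∈ W.support.tail, elt u = x := fun x =>
      hW x (Finset.mem_toList.mpr (Finset.mem_univ x))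
    have heq : W.support.tail.foldl f B = W.support.tail.foldl f q.2 := by
      ext x
      exact fold_indep ins elt W.support.tail B q.2 (hcov x)
    have h2 : Relation.ReflTransGen (decAdj G ins elt) (q.1, B)
        (q.1, W.support.tail.foldl f q.2) := heq ▸ lift_walk ins elt G W B
    have h1 : Relation.ReflTransGen (decAdj G ins elt) q
        (q.1, W.support.tail.foldl f q.2) := lift_walk ins elt G W q.2
    exact ⟨(q.1, W.support.tail.foldl f q.2), hC.2.2 q hqC _ h1, hB.trans h2⟩
  refine ⟨main, fun C' hC' => ?_⟩
  obtain ⟨p, hp⟩ := hC'.1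
  obtain ⟨q, hqC, hpq⟩ := main p
  have hqC' : q ∈ C' := hC'.2.2 p hp q hpq
  ext c
  constructor
  · intro hcC'
    exact hC.2.2 q hqC c (hC'.2.1 q hqC' c hcC')
  · intro hcC
    exact hC'.2.2 q hqC' c (hC.2.1 q hqC c hcC)
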